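/- If B is a nonempty open strict subset of R = {x ∈ ℝⁿ : xₙ > 0} whose closure is contained in R, then the set M = (−B) ∪ (R \ B) is not connected in ℝⁿ. -/
import Mathlib


theorem mixed_set_not_connected (n : ℕ) (B : Set (Fin (n + 1) → ℝ))
    (hBne : B.Nonempty) (hBopen : IsOpen B)
    (hBR : B ⊆ {x : Fin (n + 1) → ℝ | 0 < x (Fin.last n)})
    (hBstrict : B ≠ {x : Fin (n + 1) → ℝ | 0 < x (Fin.last n)})
    (hclos : closure B ⊆ {x : Fin (n + 1) → ℝ | 0 < x (Fin.last n)}) :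
    ¬ IsPreconnected ((-B) ∪ ({x : Fin (n + 1) → ℝ | 0 < x (Fin.last n)} \ B)) := by
  intro h
  set R : Set (Fin (n + 1) → ℝ) := {x | 0 < x (Fin.last n)} with hRdef
  set U : Set (Fin (n + 1) → ℝ) := {x | x (Fin.last n) < 0} with hUdef
  have hU : IsOpen U := isOpen_lt (continuous_apply _) continuous_const
  have hV : IsOpen R := isOpen_lt continuous_const (continuous_apply _)
  obtain ⟨b, hb⟩ := hBne
  obtain ⟨c, hcR, hcB⟩ : ∃ c, c ∈ R ∧ c ∉ B := by
    by_contra h'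
    push_neg at h'
    exact hBstrict (Set.Subset.antisymm hBR h')
  have hsub : (-B) ∪ (R \ B) ⊆ U ∪ R := by
    rintro x (hx | hx)
    · left
      have hxB : -x ∈ B := Set.mem_neg.mp hx
      have h0 : 0 < (-x) (Fin.last n) := hBR hxB
      have : (-x) (Fin.last n) = -(x (Fin.last n)) := rfl
      rw [this] at h0
      simpa [hUdef] using by linarith
    · right; exact hx.1
  have hne1 : ((-B ∪ (R \ B)) ∩ U).Nonempty := by
    refine ⟨-b, Or.inl (by simpa using hb), ?_⟩
    have h0 : 0 < b (Fin.last n) := hBR hb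
    have : (-b) (Fin.last n) = -(b (Fin.last n)) := rfl
    simp only [hUdef, Set.mem_setOf_eq, this]
    linarith
  have hne2 : ((-B ∪ (R \ B)) ∩ R).Nonempty :=
    ⟨c, Or.inr ⟨hcR, hcB⟩, hcR⟩
  obtain ⟨x, _, hxU, hxR⟩ := h U R hU hV hsub hne1 hne2
  have h1 : x (Fin.last n) < 0 := hxU
  have h2 : 0 < x (Fin.last n) := hxR
  linarith
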